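/- Let Φ be the standard normal cumulative distribution function and Φ^{−1} its inverse. For every β ∈ (0,1) and every α ∈ (0, 1/2), Φ^{−1}(α) − Φ^{−1}((1 − β)α) ≤ Φ^{−1}(1/2 + β/2). Equivalently: the gap between the α-quantile and the (1−β)α-quantile of the standard normal distribution is uniformly bounded over α ∈ (0, 1/2) by the (1+β)/2-quantile; this holds because Φ^{−1}(α) − Φ^{−1}((1−β)α) equals the β-quantile of the conditional distribution of z_α − Z given Z < z_α (Z standard normal, z_α = Φ^{−1}(α)), whose density is proportional to exp(−y(|z_α| + y/2)) on y ≥ 0 and which is stochastically dominated by the half-normal distribution. -/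

import Mathlib

open scoped BigOperators

/-- The standard normal cumulative distribution function
`Φ(z) = (2π)^{−1/2} ∫_{−∞}^{z} e^{−t²/2} dt`. -/
noncomputable def stdNormCDF (z : ℝ) : ℝ :=
  (Real.sqrt (2 * Real.pi))⁻¹ * ∫ t in Set.Iic z, Real.exp (-(t ^ 2) / 2)

/-- The inverse (quantile function) of the standard normal CDF. -/
noncomputable def PhiInv : ℝ → ℝ := Function.invFun stdNormCDF

/-!
Writing `a = Φ⁻¹(α) ≤ 0` and `c = Φ⁻¹(1/2 + β/2) ≥ 0`, so that `Φ(-c) = (1 - β)/2`, the claim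
`a - c ≤ Φ⁻¹((1 - β)α)` amounts to `Φ(a - c) ≤ 2 Φ(-c) Φ(a)`. This follows from the
log-concavity of `Φ`: the Mills-type ratio `Φ/φ` is increasing, because
`(Φ/φ)' = φ (φ + xΦ) / φ²` and `φ + xΦ` is an antiderivative of `Φ` vanishing at `-∞`.
Hence `x ↦ Φ(x - c)/Φ(x)` is increasing for `c ≥ 0`, and comparing `x = a` with `x = 0`,
where `Φ(0) = 1/2`, gives the inequality.
-/

open Real MeasureTheory Set Filter Topology

noncomputable def stdNormPDF (z : ℝ) : ℝ :=
  (√(2 * π))⁻¹ * exp (-(z ^ 2) / 2)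

lemma stdNormPDF_pos (z : ℝ) : 0 < stdNormPDF z := by
  unfold stdNormPDF
  positivity

lemma hasDerivAt_stdNormPDF (z : ℝ) : HasDerivAt stdNormPDF (-z * stdNormPDF z) z := by
  have h : HasDerivAt (fun z : ℝ => -(z ^ 2) / 2) (-z) z :=
    ((hasDerivAt_pow 2 z).neg.div_const 2).congr_deriv (by norm_num; ring)
  unfold stdNormPDF
  exact (h.exp.const_mul _).congr_deriv (by ring)

lemma integrable_exp_neg_sq_div_two : Integrable fun t : ℝ => exp (-(t ^ 2) / 2) := by
  convert integrable_exp_neg_mul_sq (b := (1 / 2 : ℝ)) (by norm_num) using 2 with t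
  ring_nf

lemma integral_exp_neg_sq_div_two : ∫ t : ℝ, exp (-(t ^ 2) / 2) = √(2 * π) := by
  convert integral_gaussian (1 / 2 : ℝ) using 2 with t
  · ring_nf
  · ring_nf

lemma exp_neg_sq_div_two_le_exp {t : ℝ} (ht : t ≤ -2) : exp (-(t ^ 2) / 2) ≤ exp t :=
  exp_le_exp.2 (by nlinarith)

lemma hasDerivAt_stdNormCDF (z : ℝ) : HasDerivAt stdNormCDF (stdNormPDF z) z := by
  have hint := integrable_exp_neg_sq_div_two
  have hcont : Continuous fun t : ℝ => exp (-(t ^ 2) / 2) := by fun_prop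
  have hsplit : stdNormCDF = fun x => (√(2 * π))⁻¹ *
      ((∫ t in Iic 0, exp (-(t ^ 2) / 2)) + ∫ t in (0 : ℝ)..x, exp (-(t ^ 2) / 2)) := by
    funext x
    rw [← intervalIntegral.integral_Iic_sub_Iic hint.integrableOn hint.integrableOn,
      add_sub_cancel, stdNormCDF]
  have hFTC := intervalIntegral.integral_hasDerivAt_right hint.intervalIntegrable
    hcont.aestronglyMeasurable.stronglyMeasurableAtFilter hcont.continuousAt (a := 0) (b := z)
  rw [hsplit]
  exact (hFTC.const_add _).const_mul _

lemma continuous_stdNormCDF : Continuous stdNormCDF :=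
  continuous_iff_continuousAt.2 fun z => (hasDerivAt_stdNormCDF z).continuousAt

lemma strictMono_stdNormCDF : StrictMono stdNormCDF :=
  strictMono_of_deriv_pos fun x => (hasDerivAt_stdNormCDF x).deriv ▸ stdNormPDF_pos x

lemma stdNormCDF_neg (z : ℝ) : stdNormCDF (-z) = 1 - stdNormCDF z := by
  have hint := integrable_exp_neg_sq_div_two
  have hreflect : ∫ t in Iic (-z), exp (-(t ^ 2) / 2) = ∫ t in Ioi z, exp (-(t ^ 2) / 2) := by
    have h := integral_comp_neg_Iic (-z) fun t : ℝ => exp (-(t ^ 2) / 2)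
    simp only [neg_neg, neg_sq] at h
    exact h
  have htotal := intervalIntegral.integral_Iic_add_Ioi (b := z) hint.integrableOn hint.integrableOn
  rw [integral_exp_neg_sq_div_two] at htotal
  have hs : √(2 * π) ≠ 0 := by positivity
  rw [stdNormCDF, stdNormCDF, hreflect, eq_sub_of_add_eq' htotal, mul_sub, inv_mul_cancel₀ hs]

lemma stdNormCDF_zero : stdNormCDF 0 = 1 / 2 := by
  linarith [neg_zero (G := ℝ) ▸ stdNormCDF_neg 0]

lemma stdNormCDF_nonneg (z : ℝ) : 0 ≤ stdNormCDF z := by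
  have : 0 ≤ ∫ t in Iic z, exp (-(t ^ 2) / 2) :=
    setIntegral_nonneg measurableSet_Iic fun t _ => (exp_pos _).le
  unfold stdNormCDF
  positivity

lemma stdNormCDF_pos (z : ℝ) : 0 < stdNormCDF z :=
  (stdNormCDF_nonneg (z - 1)).trans_lt (strictMono_stdNormCDF (by linarith))

lemma stdNormCDF_le_exp {z : ℝ} (hz : z ≤ -2) : stdNormCDF z ≤ (√(2 * π))⁻¹ * exp z := by
  have hmono : ∫ t in Iic z, exp (-(t ^ 2) / 2) ≤ ∫ t in Iic z, exp t :=
    setIntegral_mono_on integrable_exp_neg_sq_div_two.integrableOn (integrableOn_exp_Iic z)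
      measurableSet_Iic fun t ht => exp_neg_sq_div_two_le_exp (le_trans ht hz)
  rw [integral_exp_Iic] at hmono
  exact mul_le_mul_of_nonneg_left hmono (by positivity)

lemma stdNormPDF_le_exp {z : ℝ} (hz : z ≤ -2) : stdNormPDF z ≤ (√(2 * π))⁻¹ * exp z :=
  mul_le_mul_of_nonneg_left (exp_neg_sq_div_two_le_exp hz) (by positivity)

lemma tendsto_stdNormCDF_atBot : Tendsto stdNormCDF atBot (𝓝 0) := by
  have hexp : Tendsto (fun z => (√(2 * π))⁻¹ * exp z) atBot (𝓝 0) := by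
    simpa using tendsto_exp_atBot.const_mul (√(2 * π))⁻¹
  refine tendsto_of_tendsto_of_tendsto_of_le_of_le' tendsto_const_nhds hexp
    (Eventually.of_forall stdNormCDF_nonneg) ?_
  filter_upwards [eventually_le_atBot (-2 : ℝ)] with z hz using stdNormCDF_le_exp hz

lemma tendsto_stdNormCDF_atTop : Tendsto stdNormCDF atTop (𝓝 1) := by
  have h := (tendsto_stdNormCDF_atBot.comp tendsto_neg_atTop_atBot).const_sub 1
  rw [sub_zero] at h
  refine h.congr fun z => ?_
  simp [stdNormCDF_neg]

lemma tendsto_stdNormPDF_atBot : Tendsto stdNormPDF atBot (𝓝 0) := by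
  have hexp : Tendsto (fun z => (√(2 * π))⁻¹ * exp z) atBot (𝓝 0) := by
    simpa using tendsto_exp_atBot.const_mul (√(2 * π))⁻¹
  refine tendsto_of_tendsto_of_tendsto_of_le_of_le' tendsto_const_nhds hexp
    (Eventually.of_forall fun z => (stdNormPDF_pos z).le) ?_
  filter_upwards [eventually_le_atBot (-2 : ℝ)] with z hz using stdNormPDF_le_exp hz

lemma tendsto_mul_stdNormCDF_atBot : Tendsto (fun z => z * stdNormCDF z) atBot (𝓝 0) := by
  have hzexp : Tendsto (fun z : ℝ => (√(2 * π))⁻¹ * (z * exp z)) atBot (𝓝 0) := by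
    have h := ((tendsto_pow_mul_exp_neg_atTop_nhds_zero 1).comp tendsto_neg_atBot_atTop).neg
    simpa [Function.comp_def] using h.const_mul (√(2 * π))⁻¹
  refine tendsto_of_tendsto_of_tendsto_of_le_of_le' hzexp tendsto_const_nhds ?_ ?_
  · filter_upwards [eventually_le_atBot (-2 : ℝ)] with z hz
    nlinarith [stdNormCDF_le_exp hz]
  · filter_upwards [eventually_le_atBot (0 : ℝ)] with z hz
    exact mul_nonpos_of_nonpos_of_nonneg hz (stdNormCDF_nonneg z)

lemma stdNormPDF_add_mul_stdNormCDF_nonneg (x : ℝ) : 0 ≤ stdNormPDF x + x * stdNormCDF x := by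
  have hderiv (z : ℝ) :
      HasDerivAt (fun z => stdNormPDF z + z * stdNormCDF z) (stdNormCDF z) z :=
    ((hasDerivAt_stdNormPDF z).add ((hasDerivAt_id z).mul (hasDerivAt_stdNormCDF z))
      ).congr_deriv (by simp only [id_eq]; ring)
  have hmono : Monotone fun z => stdNormPDF z + z * stdNormCDF z :=
    monotone_of_deriv_nonneg (fun z => (hderiv z).differentiableAt)
      fun z => (hderiv z).deriv ▸ stdNormCDF_nonneg z
  have hlim := tendsto_stdNormPDF_atBot.add tendsto_mul_stdNormCDF_atBot
  rw [add_zero] at hlim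
  exact le_of_tendsto hlim (by filter_upwards [eventually_le_atBot x] with z hz using hmono hz)

lemma monotone_stdNormCDF_div_stdNormPDF : Monotone fun x => stdNormCDF x / stdNormPDF x := by
  have hderiv (x : ℝ) : HasDerivAt (fun x => stdNormCDF x / stdNormPDF x)
      ((stdNormPDF x * stdNormPDF x - stdNormCDF x * (-x * stdNormPDF x)) / stdNormPDF x ^ 2) x :=
    (hasDerivAt_stdNormCDF x).div (hasDerivAt_stdNormPDF x) (stdNormPDF_pos x).ne'
  refine monotone_of_deriv_nonneg (fun x => (hderiv x).differentiableAt) fun x => ?_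
  rw [(hderiv x).deriv]
  have hnum : stdNormPDF x * stdNormPDF x - stdNormCDF x * (-x * stdNormPDF x) =
      stdNormPDF x * (stdNormPDF x + x * stdNormCDF x) := by ring
  rw [hnum]
  exact div_nonneg (mul_nonneg (stdNormPDF_pos x).le (stdNormPDF_add_mul_stdNormCDF_nonneg x))
    (sq_nonneg _)

lemma monotone_stdNormCDF_sub_div_stdNormCDF {c : ℝ} (hc : 0 ≤ c) :
    Monotone fun x => stdNormCDF (x - c) / stdNormCDF x := by
  have hderiv (x : ℝ) : HasDerivAt (fun x => stdNormCDF (x - c) / stdNormCDF x)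
      ((stdNormPDF (x - c) * stdNormCDF x - stdNormCDF (x - c) * stdNormPDF x) /
        stdNormCDF x ^ 2) x := by
    have hshift : HasDerivAt (fun x => stdNormCDF (x - c)) (stdNormPDF (x - c)) x := by
      simpa using (hasDerivAt_stdNormCDF (x - c)).comp_sub_const x c
    exact hshift.div (hasDerivAt_stdNormCDF x) (stdNormCDF_pos x).ne'
  refine monotone_of_deriv_nonneg (fun x => (hderiv x).differentiableAt) fun x => ?_
  rw [(hderiv x).deriv]
  refine div_nonneg ?_ (sq_nonneg _)
  have hratio := monotone_stdNormCDF_div_stdNormPDF (show x - c ≤ x by linarith)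
  rw [div_le_div_iff₀ (stdNormPDF_pos _) (stdNormPDF_pos _)] at hratio
  linarith

lemma stdNormCDF_sub_le {a c : ℝ} (ha : a ≤ 0) (hc : 0 ≤ c) :
    stdNormCDF (a - c) ≤ 2 * stdNormCDF (-c) * stdNormCDF a := by
  have h := monotone_stdNormCDF_sub_div_stdNormCDF hc ha
  simp only [zero_sub] at h
  rw [stdNormCDF_zero, div_le_div_iff₀ (stdNormCDF_pos a) (by norm_num)] at h
  linarith

lemma stdNormCDF_PhiInv {y : ℝ} (hy : y ∈ Ioo (0 : ℝ) 1) : stdNormCDF (PhiInv y) = y := by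
  obtain ⟨z₁, hz₁⟩ := (tendsto_stdNormCDF_atBot.eventually_lt_const hy.1).exists
  obtain ⟨z₂, hz₂⟩ := (tendsto_stdNormCDF_atTop.eventually_const_lt hy.2).exists
  exact Function.invFun_eq
    (intermediate_value_univ z₁ z₂ continuous_stdNormCDF ⟨hz₁.le, hz₂.le⟩)

/-- Uniform bound on normal quantile gaps: for `β ∈ (0,1)` and `α ∈ (0,1/2)`,
`Φ⁻¹(α) − Φ⁻¹((1−β)α) ≤ Φ⁻¹(1/2 + β/2)` (the right side being the `β`-quantile of the
half-normal distribution). -/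
theorem normal_quantile_gap_bound
    (β α : ℝ) (hβ : β ∈ Set.Ioo (0 : ℝ) 1) (hα : α ∈ Set.Ioo (0 : ℝ) (1/2 : ℝ)) :
    PhiInv α - PhiInv ((1 - β) * α) ≤ PhiInv (1/2 + β/2) := by
  obtain ⟨hβ0, hβ1⟩ := hβ
  obtain ⟨hα0, hα2⟩ := hα
  have ha : stdNormCDF (PhiInv α) = α := stdNormCDF_PhiInv ⟨hα0, by linarith⟩
  have hb : stdNormCDF (PhiInv ((1 - β) * α)) = (1 - β) * α :=
    stdNormCDF_PhiInv ⟨by nlinarith, by nlinarith⟩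
  have hc : stdNormCDF (PhiInv (1/2 + β/2)) = 1/2 + β/2 :=
    stdNormCDF_PhiInv ⟨by linarith, by linarith⟩
  set a := PhiInv α
  set b := PhiInv ((1 - β) * α)
  set c := PhiInv (1/2 + β/2)
  have ha0 : a ≤ 0 := strictMono_stdNormCDF.le_iff_le.1 (by rw [ha, stdNormCDF_zero]; linarith)
  have hc0 : 0 ≤ c := strictMono_stdNormCDF.le_iff_le.1 (by rw [hc, stdNormCDF_zero]; linarith)
  have hgap : stdNormCDF (a - c) ≤ stdNormCDF b :=
    calc stdNormCDF (a - c) ≤ 2 * stdNormCDF (-c) * stdNormCDF a := stdNormCDF_sub_le ha0 hc0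
      _ = stdNormCDF b := by rw [stdNormCDF_neg, hc, ha, hb]; ring
  linarith [strictMono_stdNormCDF.le_iff_le.1 hgap]
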